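/- Let α, β, γ ∈ [0,1] and let π_XY, π_XZ, π_YZ be probability measures on (Ω, 𝒜_XY), (Ω, 𝒜_XZ), (Ω, 𝒜_YZ) respectively, determined by: π_XY{ω | ω.1 = true ∧ ω.2.1 = true} = α, π_XY{ω | ω.1 = false ∧ ω.2.1 = false} = 1 − α, and π_XY of each set with ω.1 ≠ ω.2.1 equals 0; π_XZ{ω | ω.1 = true ∧ ω.2.2 = true} = β, π_XZ{ω | ω.1 = false ∧ ω.2.2 = false} = 1 − β, and π_XZ of each set with ω.1 ≠ ω.2.2 equals 0; π_YZ{ω | ω.2.1 = true ∧ ω.2.2 = false} = γ, π_YZ{ω | ω.2.1 = false ∧ ω.2.2 = true} = 1 − γ, and π_YZ of each set with ω.2.1 = ω.2.2 equals 0. Suppose the multi-probability space is consistent: for every pair of contexts c, c' ∈ {XY, XZ, YZ} and every set E that is both 𝒜_c-measurable and 𝒜_{c'}-measurable, π_c(E) = π_{c'}(E). Then α = β = γ = 1/2. -/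

import Mathlib

open MeasureTheory

/-- The sample space: colours (`true` = Red, `false` = Blue) chosen by X, Y, Z. -/
abbrev SampleSpace : Type := Bool × Bool × Bool

/-- The three possible contexts: which pair of siblings attends the game. -/
inductive Ctx : Type
  | XY | XZ | YZ
deriving DecidableEq

instance : Fintype Ctx where
  elems := {Ctx.XY, Ctx.XZ, Ctx.YZ}
  complete := fun c => by cases c <;> simp

/-- The contextual σ-algebras `𝒜_c`: comaps under the respective projections of the
discrete σ-algebras on `Bool × Bool`. -/
def alg : Ctx → MeasurableSpace SampleSpace
  | Ctx.XY => MeasurableSpace.comap (fun ω : SampleSpace => (ω.1, ω.2.1)) ⊤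
  | Ctx.XZ => MeasurableSpace.comap (fun ω : SampleSpace => (ω.1, ω.2.2)) ⊤
  | Ctx.YZ => MeasurableSpace.comap (fun ω : SampleSpace => (ω.2.1, ω.2.2)) ⊤

/-- The augmented σ-algebra `𝒜^M` on the sample metaspace `Ω^M = Ω × C`:
a set `S` is measurable iff, for every context `c`, the slice `{ω | (ω, c) ∈ S}`
is `𝒜_c`-measurable. -/
def algM : MeasurableSpace (SampleSpace × Ctx) where
  MeasurableSet' S := ∀ c, MeasurableSet[alg c] {ω | (ω, c) ∈ S}
  measurableSet_empty := fun c => @MeasurableSet.empty _ (alg c)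
  measurableSet_compl := fun S hS c => (hS c).compl
  measurableSet_iUnion := fun f hf c => by
    have h : {ω | (ω, c) ∈ ⋃ i, f i} = ⋃ i, {ω | (ω, c) ∈ f i} := by
      ext ω; simp
    rw [h]
    exact MeasurableSet.iUnion fun i => hf i c

open scoped ENNReal

/-- If the contextual probability measures `π_XY`, `π_XZ`, `π_YZ` realize the correlations of
Table 1 — `X, Y` and `X, Z` perfectly correlated with diagonal probabilities `α, 1−α` and
`β, 1−β`, while `Y, Z` are perfectly anti-correlated with off-diagonal probabilities
`γ, 1−γ` — and the multi-probability space is *consistent* (events measurable in two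
contextual σ-algebras get the same probability from both contextual measures), then
`α = β = γ = 1/2`. -/
theorem consistency_forces_half
    (α β γ : ℝ≥0∞) (hα : α ≤ 1) (hβ : β ≤ 1) (hγ : γ ≤ 1)
    (π : (c : Ctx) → @Measure SampleSpace (alg c))
    (hπ : ∀ c, @IsProbabilityMeasure SampleSpace (alg c) (π c))
    (hXY₁ : π Ctx.XY {ω : SampleSpace | ω.1 = true ∧ ω.2.1 = true} = α)
    (hXY₂ : π Ctx.XY {ω : SampleSpace | ω.1 = false ∧ ω.2.1 = false} = 1 - α)
    (hXY₀ : π Ctx.XY {ω : SampleSpace | ω.1 ≠ ω.2.1} = 0)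
    (hXZ₁ : π Ctx.XZ {ω : SampleSpace | ω.1 = true ∧ ω.2.2 = true} = β)
    (hXZ₂ : π Ctx.XZ {ω : SampleSpace | ω.1 = false ∧ ω.2.2 = false} = 1 - β)
    (hXZ₀ : π Ctx.XZ {ω : SampleSpace | ω.1 ≠ ω.2.2} = 0)
    (hYZ₁ : π Ctx.YZ {ω : SampleSpace | ω.2.1 = true ∧ ω.2.2 = false} = γ)
    (hYZ₂ : π Ctx.YZ {ω : SampleSpace | ω.2.1 = false ∧ ω.2.2 = true} = 1 - γ)
    (hYZ₀ : π Ctx.YZ {ω : SampleSpace | ω.2.1 = ω.2.2} = 0)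
    (hcons : ∀ (c c' : Ctx) (E : Set SampleSpace),
      MeasurableSet[alg c] E → MeasurableSet[alg c'] E → π c E = π c' E) :
    α = 1 / 2 ∧ β = 1 / 2 ∧ γ = 1 / 2 := by

  -- Measurability of one-coordinate events in the relevant algebras
  have mX_XY : MeasurableSet[alg Ctx.XY] {ω : SampleSpace | ω.1 = true} :=
    ⟨{p : Bool × Bool | p.1 = true}, trivial, rfl⟩
  have mX_XZ : MeasurableSet[alg Ctx.XZ] {ω : SampleSpace | ω.1 = true} :=
    ⟨{p : Bool × Bool | p.1 = true}, trivial, rfl⟩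
  have mY_XY : MeasurableSet[alg Ctx.XY] {ω : SampleSpace | ω.2.1 = true} :=
    ⟨{p : Bool × Bool | p.2 = true}, trivial, rfl⟩
  have mY_YZ : MeasurableSet[alg Ctx.YZ] {ω : SampleSpace | ω.2.1 = true} :=
    ⟨{p : Bool × Bool | p.1 = true}, trivial, rfl⟩
  have mZ_XZ : MeasurableSet[alg Ctx.XZ] {ω : SampleSpace | ω.2.2 = true} :=
    ⟨{p : Bool × Bool | p.2 = true}, trivial, rfl⟩
  have mZ_YZ : MeasurableSet[alg Ctx.YZ] {ω : SampleSpace | ω.2.2 = true} :=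
    ⟨{p : Bool × Bool | p.2 = true}, trivial, rfl⟩
  -- marginals
  have pX_XY : π Ctx.XY {ω : SampleSpace | ω.1 = true} = α := by
    refine le_antisymm ?_ ?_
    · calc π Ctx.XY {ω : SampleSpace | ω.1 = true}
          ≤ π Ctx.XY ({ω : SampleSpace | ω.1 = true ∧ ω.2.1 = true} ∪ {ω : SampleSpace | ω.1 ≠ ω.2.1}) := by
            apply measure_mono; intro ω hω
            by_cases h : ω.2.1 = true <;> simp_all
      _ ≤ _ + _ := measure_union_le _ _
      _ = α := by rw [hXY₁, hXY₀, add_zero]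
    · rw [← hXY₁]; exact measure_mono (fun ω hω => hω.1)
  have pY_XY : π Ctx.XY {ω : SampleSpace | ω.2.1 = true} = α := by
    refine le_antisymm ?_ ?_
    · calc π Ctx.XY {ω : SampleSpace | ω.2.1 = true}
          ≤ π Ctx.XY ({ω : SampleSpace | ω.1 = true ∧ ω.2.1 = true} ∪ {ω : SampleSpace | ω.1 ≠ ω.2.1}) := by
            apply measure_mono; intro ω hω
            by_cases h : ω.1 = true <;> simp_all
      _ ≤ _ + _ := measure_union_le _ _
      _ = α := by rw [hXY₁, hXY₀, add_zero]
    · rw [← hXY₁]; exact measure_mono (fun ω hω => hω.2)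
  have pX_XZ : π Ctx.XZ {ω : SampleSpace | ω.1 = true} = β := by
    refine le_antisymm ?_ ?_
    · calc π Ctx.XZ {ω : SampleSpace | ω.1 = true}
          ≤ π Ctx.XZ ({ω : SampleSpace | ω.1 = true ∧ ω.2.2 = true} ∪ {ω : SampleSpace | ω.1 ≠ ω.2.2}) := by
            apply measure_mono; intro ω hω
            by_cases h : ω.2.2 = true <;> simp_all
      _ ≤ _ + _ := measure_union_le _ _
      _ = β := by rw [hXZ₁, hXZ₀, add_zero]
    · rw [← hXZ₁]; exact measure_mono (fun ω hω => hω.1)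
  have pZ_XZ : π Ctx.XZ {ω : SampleSpace | ω.2.2 = true} = β := by
    refine le_antisymm ?_ ?_
    · calc π Ctx.XZ {ω : SampleSpace | ω.2.2 = true}
          ≤ π Ctx.XZ ({ω : SampleSpace | ω.1 = true ∧ ω.2.2 = true} ∪ {ω : SampleSpace | ω.1 ≠ ω.2.2}) := by
            apply measure_mono; intro ω hω
            by_cases h : ω.1 = true <;> simp_all
      _ ≤ _ + _ := measure_union_le _ _
      _ = β := by rw [hXZ₁, hXZ₀, add_zero]
    · rw [← hXZ₁]; exact measure_mono (fun ω hω => hω.2)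
  have pY_YZ : π Ctx.YZ {ω : SampleSpace | ω.2.1 = true} = γ := by
    refine le_antisymm ?_ ?_
    · calc π Ctx.YZ {ω : SampleSpace | ω.2.1 = true}
          ≤ π Ctx.YZ ({ω : SampleSpace | ω.2.1 = true ∧ ω.2.2 = false} ∪ {ω : SampleSpace | ω.2.1 = ω.2.2}) := by
            apply measure_mono; intro ω hω
            by_cases h : ω.2.2 = true <;> simp_all
      _ ≤ _ + _ := measure_union_le _ _
      _ = γ := by rw [hYZ₁, hYZ₀, add_zero]
    · rw [← hYZ₁]; exact measure_mono (fun ω hω => hω.1)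
  have pZ_YZ : π Ctx.YZ {ω : SampleSpace | ω.2.2 = true} = 1 - γ := by
    refine le_antisymm ?_ ?_
    · calc π Ctx.YZ {ω : SampleSpace | ω.2.2 = true}
          ≤ π Ctx.YZ ({ω : SampleSpace | ω.2.1 = false ∧ ω.2.2 = true} ∪ {ω : SampleSpace | ω.2.1 = ω.2.2}) := by
            apply measure_mono; intro ω hω
            by_cases h : ω.2.1 = true <;> simp_all
      _ ≤ _ + _ := measure_union_le _ _
      _ = 1 - γ := by rw [hYZ₂, hYZ₀, add_zero]
    · rw [← hYZ₂]; exact measure_mono (fun ω hω => hω.2)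
  -- consistency
  have hαβ : α = β := by
    rw [← pX_XY, ← pX_XZ]; exact hcons _ _ _ mX_XY mX_XZ
  have hαγ : α = γ := by
    rw [← pY_XY, ← pY_YZ]; exact hcons _ _ _ mY_XY mY_YZ
  have hβγ : β = 1 - γ := by
    rw [← pZ_XZ, ← pZ_YZ]; exact hcons _ _ _ mZ_XZ mZ_YZ
  have hγγ : γ = 1 - γ := hαγ.symm.trans (hαβ.trans hβγ)
  have h2γ : γ + γ = 1 := by
    nth_rewrite 1 [hγγ]; exact tsub_add_cancel_of_le hγ
  have hγhalf : γ = 1 / 2 := by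
    have h2 : 2 * γ = 1 := by rw [two_mul]; exact h2γ
    exact (ENNReal.eq_div_iff two_ne_zero ENNReal.ofNat_ne_top).mpr h2
  exact ⟨hαγ.trans hγhalf, (hαβ.symm.trans hαγ).trans hγhalf, hγhalf⟩
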